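/- arXiv:2311.11679 — 2 statements merged into one kernel-verified Lean document; each statement's English description precedes it below -/
import Mathlib

section
/- Let Σ_S, Σ_T be finite sets and let ν : Σ_S × Σ_T → ℝ≥0. Suppose that for all σ₁, σ₂ ∈ Σ_S and τ₁, τ₂ ∈ Σ_T, ν(σ₁,τ₁)·ν(σ₂,τ₂) ≤ (1+ε)·ν(σ₁,τ₂)·ν(σ₂,τ₁). Then for any nonnegative functions p₁, p₂ : Σ_S → ℝ≥0 and q₁, q₂ : Σ_T → ℝ≥0, (Σ_{σ,τ} p₁(σ)q₁(τ)ν(σ,τ)) · (Σ_{σ,τ} p₂(σ)q₂(τ)ν(σ,τ)) ≤ (1+ε) · (Σ_{σ,τ} p₁(σ)q₂(τ)ν(σ,τ)) · (Σ_{σ,τ} p₂(σ)q₁(τ)ν(σ,τ)). -/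
/-- Correlation extension lemma: the pointwise ε-correlation condition on a nonnegative
kernel extends to arbitrary nonnegative weighted sums. -/
theorem correlation_extension
    {SigS SigT : Type*} [Fintype SigS] [Fintype SigT]
    (ν : SigS × SigT → ℝ) (hν : ∀ p, 0 ≤ ν p) (ε : ℝ) (hε : 0 ≤ ε)
    (hcorr : ∀ σ₁ σ₂ τ₁ τ₂, ν (σ₁, τ₁) * ν (σ₂, τ₂) ≤ (1 + ε) * (ν (σ₁, τ₂) * ν (σ₂, τ₁)))
    (p₁ p₂ : SigS → ℝ) (q₁ q₂ : SigT → ℝ)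
    (hp₁ : ∀ σ, 0 ≤ p₁ σ) (hp₂ : ∀ σ, 0 ≤ p₂ σ)
    (hq₁ : ∀ τ, 0 ≤ q₁ τ) (hq₂ : ∀ τ, 0 ≤ q₂ τ) :
    (∑ σ, ∑ τ, p₁ σ * q₁ τ * ν (σ, τ)) * (∑ σ, ∑ τ, p₂ σ * q₂ τ * ν (σ, τ))
      ≤ (1 + ε) *
        ((∑ σ, ∑ τ, p₁ σ * q₂ τ * ν (σ, τ)) * (∑ σ, ∑ τ, p₂ σ * q₁ τ * ν (σ, τ))) := by
  have key : ∀ (f g : SigS → SigT → ℝ),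
      (∑ σ, ∑ τ, f σ τ) * (∑ σ, ∑ τ, g σ τ)
        = ∑ σ₁, ∑ τ₁, ∑ σ₂, ∑ τ₂, f σ₁ τ₁ * g σ₂ τ₂ := by
    intro f g
    rw [Finset.sum_mul]
    refine Finset.sum_congr rfl fun σ₁ _ => ?_
    rw [Finset.sum_mul]
    refine Finset.sum_congr rfl fun τ₁ _ => ?_
    rw [Finset.mul_sum]
    refine Finset.sum_congr rfl fun σ₂ _ => ?_
    rw [Finset.mul_sum]
  have key2 : ∀ (f g : SigS → SigT → ℝ),
      (∑ σ, ∑ τ, f σ τ) * (∑ σ, ∑ τ, g σ τ)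
        = ∑ σ₁, ∑ τ₁, ∑ σ₂, ∑ τ₂, f σ₁ τ₂ * g σ₂ τ₁ := by
    intro f g
    rw [key]
    refine Finset.sum_congr rfl fun σ₁ _ => ?_
    calc ∑ τ₁, ∑ σ₂, ∑ τ₂, f σ₁ τ₁ * g σ₂ τ₂
        = ∑ τ₁, ∑ τ₂, ∑ σ₂, f σ₁ τ₁ * g σ₂ τ₂ :=
          Finset.sum_congr rfl fun _ _ => Finset.sum_comm
      _ = ∑ τ₂, ∑ τ₁, ∑ σ₂, f σ₁ τ₁ * g σ₂ τ₂ := Finset.sum_comm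
      _ = ∑ τ₁, ∑ σ₂, ∑ τ₂, f σ₁ τ₂ * g σ₂ τ₁ :=
          Finset.sum_congr rfl fun _ _ => Finset.sum_comm
  rw [key (fun σ τ => p₁ σ * q₁ τ * ν (σ, τ)) (fun σ τ => p₂ σ * q₂ τ * ν (σ, τ)),
      key2 (fun σ τ => p₁ σ * q₂ τ * ν (σ, τ)) (fun σ τ => p₂ σ * q₁ τ * ν (σ, τ))]
  simp only [Finset.mul_sum]
  refine Finset.sum_le_sum fun σ₁ _ => Finset.sum_le_sum fun τ₁ _ =>
    Finset.sum_le_sum fun σ₂ _ => Finset.sum_le_sum fun τ₂ _ => ?_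
  have hw : 0 ≤ p₁ σ₁ * q₁ τ₁ * (p₂ σ₂ * q₂ τ₂) := mul_nonneg (mul_nonneg (hp₁ σ₁) (hq₁ τ₁)) (mul_nonneg (hp₂ σ₂) (hq₂ τ₂))
  calc p₁ σ₁ * q₁ τ₁ * ν (σ₁, τ₁) * (p₂ σ₂ * q₂ τ₂ * ν (σ₂, τ₂))
      = (p₁ σ₁ * q₁ τ₁ * (p₂ σ₂ * q₂ τ₂)) * (ν (σ₁, τ₁) * ν (σ₂, τ₂)) := by ring
    _ ≤ (p₁ σ₁ * q₁ τ₁ * (p₂ σ₂ * q₂ τ₂)) * ((1 + ε) * (ν (σ₁, τ₂) * ν (σ₂, τ₁))) :=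
        mul_le_mul_of_nonneg_left (hcorr σ₁ σ₂ τ₁ τ₂) hw
    _ = (1 + ε) * (p₁ σ₁ * q₂ τ₂ * ν (σ₁, τ₂) * (p₂ σ₂ * q₁ τ₁ * ν (σ₂, τ₁))) := by ring
end

section
/- Let [L_i, R_i] for i = 0, 1, …, m be intervals with L_0 = 0, R_0 = 1, and let P be a real number with L_i ≤ P ≤ R_i for all i, and suppose L_m = R_m = P. Let ρ be a uniformly random point of [0,1). Define the random stopping index i* to be the least i ≥ 1 such that either ρ < max_{0≤j≤i} L_j or ρ ≥ min_{0≤j≤i} R_j (such i* exists since L_m = R_m). Then Pr(ρ < max_{0≤j≤i*} L_j) = P and Pr(ρ ≥ min_{0≤j≤i*} R_j) = 1 − P. -/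
open MeasureTheory

/-- Zones of indecision: with nested estimates `[L i, R i]` of `P` starting from `[0,1]`
and pinning down `P` exactly at step `m`, the adaptive stopping rule on a uniform
`ρ ∈ [0,1)` decides "low" (`ρ < max_{j ≤ i*} L j`) with probability exactly `P` and
"high" (`ρ ≥ min_{j ≤ i*} R j`) with probability exactly `1 − P`. -/
theorem zone_of_indecision
    (m : ℕ) (hm : 1 ≤ m) (L R : ℕ → ℝ) (P : ℝ)
    (hL0 : L 0 = 0) (hR0 : R 0 = 1)
    (hLP : ∀ i ≤ m, L i ≤ P) (hPR : ∀ i ≤ m, P ≤ R i)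
    (hLm : L m = P) (hRm : R m = P)
    (maxL minR : ℕ → ℝ)
    (hmaxL : ∀ i, maxL i = (Finset.Iic i).sup' ⟨i, Finset.mem_Iic.mpr le_rfl⟩ L)
    (hminR : ∀ i, minR i = (Finset.Iic i).inf' ⟨i, Finset.mem_Iic.mpr le_rfl⟩ R)
    (iStar : ℝ → ℕ)
    (hstar1 : ∀ ρ, 1 ≤ iStar ρ) (hstarm : ∀ ρ, iStar ρ ≤ m)
    (hstar2 : ∀ ρ, ρ < maxL (iStar ρ) ∨ minR (iStar ρ) ≤ ρ)
    (hstar3 : ∀ ρ, ∀ i, 1 ≤ i → i < iStar ρ → ¬(ρ < maxL i ∨ minR i ≤ ρ)) :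
    volume {ρ : ℝ | ρ ∈ Set.Ico (0:ℝ) 1 ∧ ρ < maxL (iStar ρ)} = ENNReal.ofReal P ∧
    volume {ρ : ℝ | ρ ∈ Set.Ico (0:ℝ) 1 ∧ minR (iStar ρ) ≤ ρ} = ENNReal.ofReal (1 - P) := by
  have hP0 : (0:ℝ) ≤ P := hL0 ▸ hLP 0 (Nat.zero_le m)
  have hP1 : P ≤ 1 := hR0 ▸ hPR 0 (Nat.zero_le m)
  -- maxL i ≤ P and P ≤ minR i for i ≤ m
  have hmaxLP : ∀ i ≤ m, maxL i ≤ P := by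
    intro i hi
    rw [hmaxL i]
    exact Finset.sup'_le _ _ fun j hj => hLP j (le_trans (Finset.mem_Iic.mp hj) hi)
  have hPminR : ∀ i ≤ m, P ≤ minR i := by
    intro i hi
    rw [hminR i]
    exact Finset.le_inf' _ _ fun j hj => hPR j (le_trans (Finset.mem_Iic.mp hj) hi)
  have hlow : {ρ : ℝ | ρ ∈ Set.Ico (0:ℝ) 1 ∧ ρ < maxL (iStar ρ)} = Set.Ico 0 P := by
    ext ρ
    simp only [Set.mem_setOf_eq, Set.mem_Ico]
    constructor
    · rintro ⟨⟨h0, _⟩, hlt⟩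
      exact ⟨h0, lt_of_lt_of_le hlt (hmaxLP _ (hstarm ρ))⟩
    · rintro ⟨h0, hlt⟩
      refine ⟨⟨h0, lt_of_lt_of_le hlt hP1⟩, ?_⟩
      rcases hstar2 ρ with h | h
      · exact h
      · exact absurd (lt_of_lt_of_le hlt (hPminR _ (hstarm ρ))) (not_lt.mpr h)
  have hhigh : {ρ : ℝ | ρ ∈ Set.Ico (0:ℝ) 1 ∧ minR (iStar ρ) ≤ ρ} = Set.Ico P 1 := by
    ext ρ
    simp only [Set.mem_setOf_eq, Set.mem_Ico]
    constructor
    · rintro ⟨⟨_, h1⟩, hle⟩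
      exact ⟨le_trans (hPminR _ (hstarm ρ)) hle, h1⟩
    · rintro ⟨hPρ, h1⟩
      refine ⟨⟨le_trans hP0 hPρ, h1⟩, ?_⟩
      rcases hstar2 ρ with h | h
      · exact absurd h (not_lt.mpr (le_trans (hmaxLP _ (hstarm ρ)) hPρ))
      · exact h
  rw [hlow, hhigh, Real.volume_Ico, Real.volume_Ico]
  exact ⟨by rw [sub_zero], rfl⟩
end
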